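/- arXiv:1506.04581 — 3 statements merged into one kernel-verified Lean document; each statement's English description precedes it below -/
import Mathlib

section
/- Let n ≥ 2 be an integer and a > 1 irrational. Suppose e_1, ..., e_n are positive reals with e_k ≤ 1 for k = 1, ..., n-1 and e_n ≤ a, and suppose c is a real number satisfying c ≥ 1/e_1 + e_1/e_2 + ... + e_{n-1}/e_n. If moreover e_1 < 1 and e_{n-1} ≤ 1, then c > n - 1 + 1/a. -/
/-- Key numerical estimate: with e_0 = 1, positive e_1,…,e_n, e_k ≤ 1 for k ≤ n-1,
e_n ≤ a, e_1 < 1, and c ≥ ∑ e_k/e_{k+1} (the sum 1/e_1 + e_1/e_2 + ⋯ + e_{n-1}/e_n),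
we get c > n - 1 + 1/a. -/
theorem stmt3 (n : ℕ) (hn : 2 ≤ n) (a : ℝ) (ha : 1 < a) (hairr : Irrational a)
    (e : ℕ → ℝ) (he0 : e 0 = 1)
    (hpos : ∀ k, 1 ≤ k → k ≤ n → 0 < e k)
    (hle1 : ∀ k, 1 ≤ k → k ≤ n - 1 → e k ≤ 1)
    (hen : e n ≤ a)
    (c : ℝ) (hc : c ≥ ∑ k ∈ Finset.range n, e k / e (k + 1))
    (he1 : e 1 < 1) (henm1 : e (n - 1) ≤ 1) :
    c > (n : ℝ) - 1 + 1 / a := by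
  obtain ⟨m, rfl⟩ : ∃ m, n = m + 1 := ⟨n - 1, by omega⟩
  have hm : 1 ≤ m := by omega
  simp only [Nat.add_sub_cancel] at henm1
  have ha0 : (0:ℝ) < a := by linarith
  have hpos' : ∀ k, k ≤ m + 1 → 0 < e k := by
    intro k hk
    rcases Nat.eq_zero_or_pos k with h | h
    · simp [h, he0]
    · exact hpos k h hk
  have hem : 0 < e m := hpos' m (by omega)
  have hen0 : 0 < e (m + 1) := hpos' _ le_rfl
  have he1pos : 0 < e 1 := hpos' 1 (by omega)
  -- per-term log bound
  have key : ∀ k ∈ Finset.range m,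
      1 + (Real.log (e k) - Real.log (e (k + 1))) ≤ e k / e (k + 1) := by
    intro k hk
    have hk' := Finset.mem_range.mp hk
    have h1 : 0 < e k := hpos' k (by omega)
    have h2 : 0 < e (k + 1) := hpos' (k + 1) (by omega)
    have hq : 0 < e k / e (k + 1) := div_pos h1 h2
    have h3 := Real.log_le_sub_one_of_pos hq
    rw [Real.log_div h1.ne' h2.ne'] at h3
    linarith
  have keystrict : 1 + (Real.log (e 0) - Real.log (e 1)) < e 0 / e 1 := by
    have hq : 0 < e 0 / e 1 := div_pos (by simp [he0]) he1pos
    have hne : e 0 / e 1 ≠ 1 := by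
      rw [he0]
      intro h
      rw [div_eq_one_iff_eq he1pos.ne'] at h
      linarith
    have h3 := Real.log_lt_sub_one_of_pos hq hne
    rw [Real.log_div (by simp [he0]) he1pos.ne'] at h3
    linarith
  have hsumlt : ∑ k ∈ Finset.range m, (1 + (Real.log (e k) - Real.log (e (k + 1))))
      < ∑ k ∈ Finset.range m, e k / e (k + 1) :=
    Finset.sum_lt_sum key ⟨0, Finset.mem_range.mpr (by omega), keystrict⟩
  have htel : ∑ k ∈ Finset.range m, (1 + (Real.log (e k) - Real.log (e (k + 1))))
      = (m : ℝ) + (Real.log (e 0) - Real.log (e m)) := by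
    rw [Finset.sum_add_distrib, Finset.sum_const, Finset.card_range,
      Finset.sum_range_sub' (fun k => Real.log (e k)), nsmul_eq_mul, mul_one]
  have hlast : e m / a ≤ e m / (e (m + 1)) := by
    gcongr
  have hfull : ∑ k ∈ Finset.range (m + 1), e k / e (k + 1)
      = (∑ k ∈ Finset.range m, e k / e (k + 1)) + e m / e (m + 1) :=
    Finset.sum_range_succ _ _
  -- final numeric estimate: -log t + t/a ≥ 1/a for 0 < t ≤ 1
  have hlog : Real.log (e m) ≤ e m - 1 := Real.log_le_sub_one_of_pos hem
  have hfin : 1 / a ≤ -Real.log (e m) + e m / a := by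
    have h1 : (1 - e m) / a ≤ 1 - e m := by
      apply div_le_self (by linarith) ha.le
    have h2 : 1 - e m ≤ -Real.log (e m) := by linarith
    have h3 : (1 - e m) / a = 1 / a - e m / a := by ring
    linarith
  have hlog0 : Real.log (e 0) = 0 := by simp [he0]
  have : (m : ℝ) + 1 / a < ∑ k ∈ Finset.range (m + 1), e k / e (k + 1) := by
    rw [hfull]
    have := hsumlt
    rw [htel, hlog0] at this
    linarith
  push_cast
  linarith
end

section
/- For n ≥ 2, a ∈ (1,12), and z ∈ ℂⁿ with max_j |z_j| < n^{-6}: the inequality 6·log(|z_1|² + ... + |z_n|²) - 6n ≤ log max(|z_1|, ..., |z_{n-1}|, |z_n|^a) holds. -/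
/-! Since every `‖z j‖ ≤ 1` and `a ≤ 12`, each `‖z j‖ ^ 12` is at most the maximum `R` on the
right: for `j < n - 1` it is at most `‖z j‖`, and for the last coordinate at most `‖z j‖ ^ a`.
The power-mean inequality then gives `(∑ ‖z j‖ ^ 2) ^ 6 ≤ n ^ 5 ∑ ‖z j‖ ^ 12 ≤ n ^ 6 R`, and
taking logarithms with `log n ≤ n` finishes. -/

open Finset Real

theorem pow_le_max_ciSup_rpow {ι : Type*} [Finite ι] {p : ι → Prop} {f : ι → ℝ}
    (hf0 : ∀ i, 0 ≤ f i) (hf1 : ∀ i, f i ≤ 1) {i₀ : ι} (hi₀ : ∀ i, ¬p i → i = i₀)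
    {a : ℝ} {k : ℕ} (hk : k ≠ 0) (hak : a ≤ k) (i : ι) :
    f i ^ k ≤ max (⨆ j : {j // p j}, f j) (f i₀ ^ a) := by
  by_cases hi : p i
  · calc f i ^ k ≤ f i := pow_le_of_le_one (hf0 i) (hf1 i) hk
      _ ≤ ⨆ j : {j // p j}, f j :=
        le_ciSup (f := fun j : {j // p j} => f j) (Set.finite_range _).bddAbove ⟨i, hi⟩
      _ ≤ _ := le_max_left _ _
  · obtain rfl := hi₀ i hi
    rw [← Real.rpow_natCast]
    refine (rpow_le_rpow_of_exponent_ge_of_imp (hf0 i) (hf1 i) hak fun _ hk0 => ?_).trans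
      (le_max_right _ _)
    exact absurd (by exact_mod_cast hk0) hk

theorem sum_pow_le_card_pow_mul {ι : Type*} {s : Finset ι} {f : ι → ℝ} (hf : ∀ i ∈ s, 0 ≤ f i)
    {R : ℝ} {k : ℕ} (hR : ∀ i ∈ s, f i ^ (k + 1) ≤ R) :
    (∑ i ∈ s, f i) ^ (k + 1) ≤ (#s : ℝ) ^ (k + 1) * R :=
  calc (∑ i ∈ s, f i) ^ (k + 1) ≤ (#s : ℝ) ^ k * ∑ i ∈ s, f i ^ (k + 1) :=
        pow_sum_le_card_mul_sum_pow hf k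
    _ ≤ (#s : ℝ) ^ k * (#s * R) := by
        gcongr
        simpa using sum_le_card_nsmul s _ R hR
    _ = (#s : ℝ) ^ (k + 1) * R := by ring

theorem mul_log_sub_le_log_of_pow_le {x R : ℝ} {n k : ℕ} (hx : 0 < x) (hn : 0 < n)
    (h : x ^ k ≤ (n : ℝ) ^ k * R) : k * log x - k * n ≤ log R := by
  have hn' : (0 : ℝ) < n := by exact_mod_cast hn
  have hR : 0 < R := pos_of_mul_pos_right ((pow_pos hx k).trans_le h) (by positivity)
  have hlog := log_le_log (pow_pos hx k) h
  rw [log_pow, log_mul (by positivity) hR.ne', log_pow] at hlog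
  have hlogn : k * log n ≤ k * n :=
    mul_le_mul_of_nonneg_left ((log_le_sub_one_of_pos hn').trans (by linarith)) (by positivity)
  linarith

theorem log_max_zero_zero_rpow (a : ℝ) : log (max 0 ((0 : ℝ) ^ a)) = 0 := by
  rcases eq_or_ne a 0 with rfl | ha <;> simp [*]

/-- For z with max_j |z_j| < n^{-6}:
6 log(∑|z_j|²) - 6n ≤ log max(|z_1|,…,|z_{n-1}|, |z_n|^a), n ≥ 2, 1 < a < 12. -/
theorem stmt8 (n : ℕ) (hn : 2 ≤ n) (a : ℝ) (ha2 : a < 12)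
    (z : Fin n → ℂ)
    (hz : (⨆ j : Fin n, ‖z j‖) < ((n : ℝ) ^ 6)⁻¹) :
    6 * Real.log (∑ j : Fin n, ‖z j‖ ^ 2) - 6 * n ≤
      Real.log (max (⨆ i : {i : Fin n // (i : ℕ) < n - 1}, ‖z i.1‖)
        (‖z ⟨n - 1, by omega⟩‖ ^ a)) := by
  have hz1 (j : Fin n) : ‖z j‖ ≤ 1 :=
    calc ‖z j‖ ≤ ⨆ j, ‖z j‖ :=
          le_ciSup (f := fun j => ‖z j‖) (Set.finite_range _).bddAbove j
      _ ≤ ((n : ℝ) ^ 6)⁻¹ := hz.le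
      _ ≤ 1 := inv_le_one_of_one_le₀ (one_le_pow₀ (by norm_cast; omega))
  rcases (sum_nonneg fun j _ => sq_nonneg ‖z j‖).eq_or_lt with hsum | hsum
  · -- junk values: both sides involve `log 0 = 0`, and `0 ^ a ∈ {0, 1}`
    have hzero : ∀ j, z j = 0 := by
      simpa using (sum_eq_zero_iff_of_nonneg (s := univ) fun j _ => sq_nonneg ‖z j‖).1 hsum.symm
    simp [hzero, log_max_zero_zero_rpow]
  · have hpow (j : Fin n) : (‖z j‖ ^ 2) ^ (5 + 1) ≤
        max (⨆ i : {i : Fin n // (i : ℕ) < n - 1}, ‖z i.1‖) (‖z ⟨n - 1, by omega⟩‖ ^ a) := by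
      rw [← pow_mul]
      exact pow_le_max_ciSup_rpow (fun _ => norm_nonneg _) hz1
        (fun i hi => Fin.ext (by simp only; omega)) (by norm_num) (by push_cast; linarith) j
    have hsum_pow := sum_pow_le_card_pow_mul (s := univ) (fun j _ => sq_nonneg ‖z j‖)
      fun j _ => hpow j
    have hlog := mul_log_sub_le_log_of_pow_le (n := n) (k := 6) hsum (by omega)
      (by simpa using hsum_pow)
    exact_mod_cast hlog
end

section
/- For n ≥ 2 and irrational a > 1: if positive reals e_1, ..., e_n satisfy e_k ≤ 1 for 1 ≤ k ≤ n-1, e_n ≤ a, and n - 1 + 1/a ≥ 1/e_1 + e_1/e_2 + ... + e_{n-1}/e_n, then e_1 = e_2 = ... = e_{n-1} = 1 and e_n = a. -/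
/-- Equality analysis: if e_0 = 1, e_1,…,e_n > 0, e_k ≤ 1 for k ≤ n-1, e_n ≤ a, and
n - 1 + 1/a ≥ 1/e_1 + e_1/e_2 + ⋯ + e_{n-1}/e_n, then e_1 = ⋯ = e_{n-1} = 1 and e_n = a. -/
theorem stmt19 (n : ℕ) (hn : 2 ≤ n) (a : ℝ) (ha : 1 < a) (hairr : Irrational a)
    (e : ℕ → ℝ) (he0 : e 0 = 1)
    (hpos : ∀ k, 1 ≤ k → k ≤ n → 0 < e k)
    (hle1 : ∀ k, 1 ≤ k → k ≤ n - 1 → e k ≤ 1)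
    (hen : e n ≤ a)
    (hsum : (n : ℝ) - 1 + 1 / a ≥ ∑ k ∈ Finset.range n, e k / e (k + 1)) :
    (∀ k, 1 ≤ k → k ≤ n - 1 → e k = 1) ∧ e n = a := by
  obtain ⟨m, rfl⟩ : ∃ m, n = m + 1 := ⟨n - 1, by omega⟩
  have hm : 1 ≤ m := by omega
  simp only [Nat.add_sub_cancel] at hle1 ⊢
  have ha0 : (0:ℝ) < a := lt_trans one_pos ha
  have hposall : ∀ k, k ≤ m + 1 → 0 < e k := by
    intro k hk
    rcases Nat.eq_zero_or_pos k with h | h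
    · simp [h, he0]
    · exact hpos k h hk
  set t := e m with ht
  have htpos : 0 < t := hposall m (by omega)
  have ht1 : t ≤ 1 := hle1 m hm le_rfl
  have henpos : 0 < e (m + 1) := hposall (m + 1) le_rfl
  clear_value t
  -- slack terms
  set A := ∑ k ∈ Finset.range m,
      (e k / e (k + 1) - 1 - (Real.log (e k) - Real.log (e (k + 1)))) with hA
  have hterm : ∀ k ∈ Finset.range m,
      0 ≤ e k / e (k + 1) - 1 - (Real.log (e k) - Real.log (e (k + 1))) := by
    intro k hk
    simp only [Finset.mem_range] at hk
    have h1 : 0 < e k := hposall k (by omega)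
    have h2 : 0 < e (k + 1) := hposall (k + 1) (by omega)
    have hx : 0 < e k / e (k + 1) := div_pos h1 h2
    have := Real.log_le_sub_one_of_pos hx
    rw [Real.log_div h1.ne' h2.ne'] at this
    linarith
  have hA0 : 0 ≤ A := Finset.sum_nonneg hterm
  clear_value A
  set B := t / e (m + 1) - t / a with hB
  clear_value B
  have hB0 : 0 ≤ B := by
    have : t / a ≤ t / e (m + 1) := by gcongr
    linarith
  set C := t / a - Real.log t - 1 / a with hC
  clear_value C
  have hlogt : Real.log t ≤ t - 1 := Real.log_le_sub_one_of_pos htpos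
  have hfrac : (t - 1) * a ≤ t - 1 := by nlinarith
  have hC0 : 0 ≤ C := by
    rw [hC]
    have h2 : t - 1 ≤ (t - 1) / a := by
      rw [le_div_iff₀ ha0]; exact hfrac
    have h3 : t / a - 1 / a = (t - 1) / a := by ring
    linarith
  -- split the sum
  have hsplit : ∑ k ∈ Finset.range (m + 1), e k / e (k + 1)
      = A + (m : ℝ) - Real.log t + t / e (m + 1) := by
    rw [Finset.sum_range_succ, hA]
    have : ∑ k ∈ Finset.range m, (e k / e (k + 1))
        = ∑ k ∈ Finset.range m,
          ((e k / e (k + 1) - 1 - (Real.log (e k) - Real.log (e (k + 1))))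
            + 1 + (Real.log (e k) - Real.log (e (k + 1)))) := by
      apply Finset.sum_congr rfl; intro k _; ring
    rw [this]
    simp only [Finset.sum_add_distrib, Finset.sum_const, Finset.card_range,
      nsmul_eq_mul, mul_one, Finset.sum_range_sub']
    rw [he0, Real.log_one, ht]
    ring
  have hcast : ((m + 1 : ℕ) : ℝ) - 1 = (m : ℝ) := by push_cast; ring
  rw [hsplit] at hsum
  have hkey : A + B + C ≤ 0 := by
    rw [hcast] at hsum
    have : t / e (m + 1) = B + t / a := by rw [hB]; ring
    rw [this] at hsum
    have : t / a - Real.log t = C + 1 / a := by rw [hC]; ring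
    linarith [hsum, this]
  have hAz : A = 0 := by linarith
  have hBz : B = 0 := by linarith
  have hCz : C = 0 := by linarith
  -- C = 0 forces t = 1
  have htone : t = 1 := by
    by_contra hne
    have hlt : t < 1 := lt_of_le_of_ne ht1 hne
    have hstrict : Real.log t < t - 1 :=
      Real.log_lt_sub_one_of_pos htpos hne
    have h2 : t - 1 < (t - 1) / a := by
      rw [lt_div_iff₀ ha0]; nlinarith
    have h3 : t / a - 1 / a = (t - 1) / a := by ring
    have : 0 < C := by rw [hC]; linarith
    linarith
  -- B = 0 forces e (m+1) = a
  have hena : e (m + 1) = a := by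
    rw [hB, htone] at hBz
    have h1 : 1 / e (m + 1) = 1 / a := by linarith
    field_simp at h1
    linarith
  -- A = 0 forces each step equal
  have hstep : ∀ k < m, e k = e (k + 1) := by
    intro k hk
    rw [hA] at hAz
    have := (Finset.sum_eq_zero_iff_of_nonneg hterm).mp hAz k
      (Finset.mem_range.mpr hk)
    have h1 : 0 < e k := hposall k (by omega)
    have h2 : 0 < e (k + 1) := hposall (k + 1) (by omega)
    have hx : 0 < e k / e (k + 1) := div_pos h1 h2
    by_contra hne
    have hxne : e k / e (k + 1) ≠ 1 := by
      intro h; exact hne (by field_simp at h; linarith)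
    have hstrict := Real.log_lt_sub_one_of_pos hx hxne
    rw [Real.log_div h1.ne' h2.ne'] at hstrict
    linarith
  have hall : ∀ k, k ≤ m → e k = 1 := by
    intro k
    induction k with
    | zero => intro _; exact he0
    | succ j ih =>
      intro hj
      rw [← hstep j (by omega)]
      exact ih (by omega)
  exact ⟨fun k _ hk => hall k hk, hena⟩
end
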